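/- arXiv:math/0501208 — 7 statements merged into one kernel-verified Lean document; each statement's English description precedes it below -/
import Mathlib

section
/- Fix i ∈ {0,...,m}. Define x_i(t) = 4·arctan(e^{λ_i t}) and x_j(t) = 0 for j ≠ i, and y_j(t) = l_j²·x_j'(t) for all j. Then (y(t), x(t)) is a solution of Hamilton's equations for H, i.e. x_j'(t) = y_j(t)/l_j² and y_j'(t) = −(∂U/∂x_j)(x(t)) for all j and all t ∈ ℝ; moreover H(y(t),x(t)) = 0 for all t, x_i(t) → 0 as t → −∞, x_i(t) → 2π as t → +∞, and y(t) → 0 as t → ±∞. -/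
open Real Filter Topology

lemma sin_four_arctan (u : ℝ) :
    Real.sin (4 * Real.arctan u) = 4*u*(1-u^2)/(1+u^2)^2 := by
  have h1 : (0:ℝ) < 1 + u^2 := by positivity
  have hr : Real.sqrt (1+u^2) ^ 2 = 1 + u^2 := Real.sq_sqrt h1.le
  have hr0 : Real.sqrt (1+u^2) ≠ 0 := by positivity
  have h4 : (4:ℝ) * Real.arctan u = 2*(2*Real.arctan u) := by ring
  rw [h4, Real.sin_two_mul, Real.sin_two_mul, Real.cos_two_mul,
    Real.sin_arctan, Real.cos_arctan]
  rw [← hr]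
  field_simp
  rw [Real.sqrt_sq (Real.sqrt_nonneg _)]
  linear_combination (-4 * u * Real.sqrt (1+u^2) ^ 4) * hr

lemma cos_four_arctan (u : ℝ) :
    Real.cos (4 * Real.arctan u) = 1 - 8*u^2/(1+u^2)^2 := by
  have h1 : (0:ℝ) < 1 + u^2 := by positivity
  have hr : Real.sqrt (1+u^2) ^ 2 = 1 + u^2 := Real.sq_sqrt h1.le
  have hr0 : Real.sqrt (1+u^2) ≠ 0 := by positivity
  have h4 : (4:ℝ) * Real.arctan u = 2*(2*Real.arctan u) := by ring
  rw [h4, Real.cos_two_mul, Real.cos_two_mul, Real.cos_arctan]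
  field_simp
  ring_nf
  linear_combination (8*u^2*(1+u^2) + 8*u^2*Real.sqrt (1+u^2)^2 - 8*(1+u^2)^2) * hr

lemma soliton_hasDerivAt (a t : ℝ) :
    HasDerivAt (fun τ => 4 * Real.arctan (Real.exp (a * τ)))
      (4 * a * Real.exp (a * t) / (1 + Real.exp (a * t) ^ 2)) t := by
  have h1 : HasDerivAt (fun τ : ℝ => a * τ) a t := by
    simpa using (hasDerivAt_id t).const_mul a
  have h2 : HasDerivAt (fun τ => Real.exp (a * τ)) (Real.exp (a * t) * a) t := h1.exp
  have h3 := (Real.hasDerivAt_arctan (Real.exp (a * t))).comp t h2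
  have h4 := h3.const_mul 4
  refine h4.congr_deriv ?_
  have : (0:ℝ) < 1 + Real.exp (a*t)^2 := by positivity
  ring

lemma soliton_hasDerivAt2 (a t : ℝ) :
    HasDerivAt (fun τ => 4 * a * Real.exp (a * τ) / (1 + Real.exp (a * τ) ^ 2))
      (4 * a^2 * Real.exp (a*t) * (1 - Real.exp (a*t)^2) / (1 + Real.exp (a*t)^2)^2) t := by
  have h1 : HasDerivAt (fun τ : ℝ => a * τ) a t := by
    simpa using (hasDerivAt_id t).const_mul a
  have h2 : HasDerivAt (fun τ => Real.exp (a * τ)) (Real.exp (a * t) * a) t := h1.exp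
  have hnum := h2.const_mul (4*a)
  have hden : HasDerivAt (fun τ => 1 + Real.exp (a*τ)^2)
      ((2:ℕ) * Real.exp (a*t) ^ 1 * (Real.exp (a*t)*a)) t := (h2.pow 2).const_add 1
  have hne : (1 + Real.exp (a*t)^2) ≠ 0 := by positivity
  have h := hnum.div hden hne
  refine h.congr_deriv ?_
  ring

lemma U_fderiv_apply (m : ℕ) (l : Fin (m+1) → ℝ) (p : Fin (m+1) → ℝ) (j : Fin (m+1)) :
    fderiv ℝ (fun q => ∑ k, l k * (∏ j' ∈ Finset.Icc k (Fin.last m), Real.cos (q j') - 1)) p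
      (Pi.single j 1)
      = ∑ k, l k * (if j ∈ Finset.Icc k (Fin.last m) then
          (∏ j' ∈ (Finset.Icc k (Fin.last m)).erase j, Real.cos (p j')) * (-Real.sin (p j))
        else 0) := by
  classical
  have hfact : ∀ j' : Fin (m+1), HasFDerivAt (fun q : Fin (m+1) → ℝ => Real.cos (q j'))
      ((-Real.sin (p j')) • (ContinuousLinearMap.proj j' : (Fin (m+1) → ℝ) →L[ℝ] ℝ)) p :=
    fun j' => (ContinuousLinearMap.proj j' :
      (Fin (m+1) → ℝ) →L[ℝ] ℝ).hasFDerivAt.cos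
  have hprod : ∀ S : Finset (Fin (m+1)),
      HasFDerivAt (fun q : Fin (m+1) → ℝ => ∏ j' ∈ S, Real.cos (q j'))
        (∑ j' ∈ S, (∏ j'' ∈ S.erase j', Real.cos (p j'')) •
          ((-Real.sin (p j')) • (ContinuousLinearMap.proj j' : (Fin (m+1) → ℝ) →L[ℝ] ℝ))) p :=
    fun S => HasFDerivAt.finset_prod (fun j' _ => hfact j')
  have hsum : HasFDerivAt (fun q : Fin (m+1) → ℝ =>
      ∑ k, l k * (∏ j' ∈ Finset.Icc k (Fin.last m), Real.cos (q j') - 1))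
      (∑ k, l k • (∑ j' ∈ Finset.Icc k (Fin.last m),
        (∏ j'' ∈ (Finset.Icc k (Fin.last m)).erase j', Real.cos (p j'')) •
          ((-Real.sin (p j')) • (ContinuousLinearMap.proj j' : (Fin (m+1) → ℝ) →L[ℝ] ℝ)))) p :=
    HasFDerivAt.fun_sum (fun k _ =>
      ((hprod (Finset.Icc k (Fin.last m))).sub_const 1).const_mul (l k))
  rw [hsum.fderiv]
  rw [ContinuousLinearMap.sum_apply]
  refine Finset.sum_congr rfl (fun k _ => ?_)
  rw [ContinuousLinearMap.smul_apply, ContinuousLinearMap.sum_apply, smul_eq_mul]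
  congr 1
  have : ∀ j' ∈ Finset.Icc k (Fin.last m),
      ((∏ j'' ∈ (Finset.Icc k (Fin.last m)).erase j', Real.cos (p j'')) •
        ((-Real.sin (p j')) • (ContinuousLinearMap.proj j' : (Fin (m+1) → ℝ) →L[ℝ] ℝ)))
        (Pi.single j 1)
      = if j' = j then
          (∏ j'' ∈ (Finset.Icc k (Fin.last m)).erase j', Real.cos (p j'')) * (-Real.sin (p j'))
        else 0 := by
    intro j' _
    rw [ContinuousLinearMap.smul_apply, ContinuousLinearMap.smul_apply,
      ContinuousLinearMap.proj_apply, Pi.single_apply]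
    by_cases h : j' = j
    · simp [h]
    · simp [h]
  rw [Finset.sum_congr rfl this, Finset.sum_ite_eq' (Finset.Icc k (Fin.last m)) j]

/-- The homoclinic orbit `x_i(t) = 4 arctan (e^{λ_i t})` (other coordinates zero),
with momenta `y_j = l_j² x_j'`, solves Hamilton's equations for the toroidal pendulum
`H(y,x) = (1/2)Σ y_i²/l_i² + Σ l_i (∏_{j=i}^m cos x_j − 1)`, lies on the zero energy level,
and is biasymptotic to the fixed point (`x_i → 0` at `−∞`, `x_i → 2π` at `+∞`, `y → 0`). -/
theorem toroidal_pendulum_homoclinic_orbit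
    (m : ℕ) (l : Fin (m + 1) → ℝ) (hl : ∀ i, 0 < l i) (i : Fin (m + 1))
    (U : (Fin (m + 1) → ℝ) → ℝ)
    (hU : ∀ x, U x = ∑ k, l k * (∏ j ∈ Finset.Icc k (Fin.last m), Real.cos (x j) - 1))
    (K : (Fin (m + 1) → ℝ) → ℝ)
    (hK : ∀ y, K y = (1 / 2) * ∑ k, (y k) ^ 2 / (l k) ^ 2)
    (H : (Fin (m + 1) → ℝ) → (Fin (m + 1) → ℝ) → ℝ)
    (hH : ∀ y x, H y x = K y + U x)
    (lam : Fin (m + 1) → ℝ)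
    (hlam : ∀ k, lam k = (1 / l k) * Real.sqrt (∑ j ∈ Finset.Iic k, l j))
    (x : ℝ → Fin (m + 1) → ℝ)
    (hx : ∀ t j, x t j = if j = i then 4 * Real.arctan (Real.exp (lam i * t)) else 0)
    (y : ℝ → Fin (m + 1) → ℝ)
    (hy : ∀ t j, y t j = (l j) ^ 2 * deriv (fun τ => x τ j) t) :
    (∀ t j, HasDerivAt (fun τ => x τ j) (y t j / (l j) ^ 2) t) ∧
    (∀ t j, HasDerivAt (fun τ => y τ j) (-(fderiv ℝ U (x t) (Pi.single j 1))) t) ∧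
    (∀ t, H (y t) (x t) = 0) ∧
    Tendsto (fun t => x t i) atBot (nhds 0) ∧
    Tendsto (fun t => x t i) atTop (nhds (2 * Real.pi)) ∧
    (∀ j, Tendsto (fun t => y t j) atBot (nhds 0) ∧
      Tendsto (fun t => y t j) atTop (nhds 0)) := by
  classical
  have hli : (0:ℝ) < l i := hl i
  have hs : 0 < ∑ j ∈ Finset.Iic i, l j :=
    Finset.sum_pos (fun j _ => hl j) ⟨i, Finset.mem_Iic.mpr le_rfl⟩
  have hlampos : 0 < lam i := by
    rw [hlam]
    exact mul_pos (by positivity) (Real.sqrt_pos.mpr hs)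
  have hlamsq : l i ^ 2 * lam i ^ 2 = ∑ j ∈ Finset.Iic i, l j := by
    rw [hlam, mul_pow, one_div, inv_pow, Real.sq_sqrt hs.le]
    field_simp
  have hxifun : (fun τ => x τ i) = (fun τ => 4 * Real.arctan (Real.exp (lam i * τ))) :=
    funext fun τ => by simp [hx]
  have hxjfun : ∀ j, j ≠ i → (fun τ => x τ j) = (fun _ => (0:ℝ)) :=
    fun j hj => funext fun τ => by simp [hx, hj]
  have hxval : ∀ t j, j ≠ i → x t j = 0 := fun t j hj => by simp [hx, hj]
  have hyi : ∀ t, y t i = l i ^ 2 *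
      (4 * lam i * Real.exp (lam i * t) / (1 + Real.exp (lam i * t) ^ 2)) := by
    intro t
    rw [hy, hxifun, (soliton_hasDerivAt (lam i) t).deriv]
  have hyj : ∀ t j, j ≠ i → y t j = 0 := by
    intro t j hj
    rw [hy, hxjfun j hj, deriv_const]
    ring
  have hUfun : U = fun q => ∑ k, l k * (∏ j' ∈ Finset.Icc k (Fin.last m), Real.cos (q j') - 1) :=
    funext hU
  have hfd : ∀ t j, fderiv ℝ U (x t) (Pi.single j 1)
      = if j = i then -((∑ k ∈ Finset.Iic i, l k) * Real.sin (x t i)) else 0 := by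
    intro t j
    rw [hUfun, U_fderiv_apply]
    by_cases hj : j = i
    · subst hj
      rw [if_pos rfl]
      have hterm : ∀ k : Fin (m+1), l k * (if j ∈ Finset.Icc k (Fin.last m) then
            (∏ j' ∈ (Finset.Icc k (Fin.last m)).erase j, Real.cos (x t j')) * (-Real.sin (x t j))
          else 0) = if k ≤ j then l k * (-Real.sin (x t j)) else 0 := by
        intro k
        by_cases hk : k ≤ j
        · rw [if_pos (Finset.mem_Icc.mpr ⟨hk, Fin.le_last j⟩), if_pos hk,
            Finset.prod_eq_one (fun b hb => ?_), one_mul]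
          have hb' : b ≠ j := Finset.ne_of_mem_erase hb
          rw [hxval t b hb', Real.cos_zero]
        · rw [if_neg hk, if_neg (fun hmem => hk (Finset.mem_Icc.mp hmem).1), mul_zero]
      rw [Finset.sum_congr rfl (fun k _ => hterm k), ← Finset.sum_filter]
      have hfil : Finset.univ.filter (· ≤ j) = Finset.Iic j := by
        ext k; simp
      rw [hfil, ← Finset.sum_mul]
      ring
    · rw [if_neg hj]
      refine Finset.sum_eq_zero (fun k _ => ?_)
      rw [hxval t j hj, Real.sin_zero, neg_zero, mul_zero]
      split_ifs <;> ring
  refine ⟨?_, ?_, ?_, ?_, ?_, ?_⟩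
  · -- Hamilton eq 1
    intro t j
    by_cases hj : j = i
    · subst hj
      have h0 : y t j / l j ^ 2 =
          4 * lam j * Real.exp (lam j * t) / (1 + Real.exp (lam j * t) ^ 2) := by
        rw [hyi]
        field_simp
      rw [hxifun, h0]
      exact soliton_hasDerivAt (lam j) t
    · have h0 : y t j / l j ^ 2 = 0 := by rw [hyj t j hj]; ring
      rw [hxjfun j hj, h0]
      exact hasDerivAt_const t 0
  · -- Hamilton eq 2
    intro t j
    by_cases hj : j = i
    · subst hj
      have hyfun : (fun τ => y τ j) = fun τ => l j ^ 2 *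
          (4 * lam j * Real.exp (lam j * τ) / (1 + Real.exp (lam j * τ) ^ 2)) :=
        funext fun τ => hyi τ
      rw [hyfun, hfd t j, if_pos rfl]
      have h := (soliton_hasDerivAt2 (lam j) t).const_mul (l j ^ 2)
      refine h.congr_deriv ?_
      symm
      rw [neg_neg, (show x t j = 4 * Real.arctan (Real.exp (lam j * t)) by simp [hx]),
        sin_four_arctan]
      linear_combination (-(4 * Real.exp (lam j * t) * (1 - Real.exp (lam j * t) ^ 2) /
        (1 + Real.exp (lam j * t) ^ 2) ^ 2)) * hlamsq
    · have hyfun : (fun τ => y τ j) = fun _ => (0:ℝ) := funext fun τ => hyj τ j hj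
      rw [hyfun, hfd t j, if_neg hj, neg_zero]
      exact hasDerivAt_const t 0
  · -- energy
    intro t
    rw [hH, hK, hU]
    have hKsum : ∑ k, (y t k) ^ 2 / (l k) ^ 2 = (y t i) ^ 2 / (l i) ^ 2 :=
      Finset.sum_eq_single i (fun k _ hk => by rw [hyj t k hk]; simp)
        (fun h => absurd (Finset.mem_univ i) h)
    have hprodval : ∀ k : Fin (m+1), (∏ j' ∈ Finset.Icc k (Fin.last m), Real.cos (x t j'))
        = if k ≤ i then Real.cos (x t i) else 1 := by
      intro k
      by_cases hk : k ≤ i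
      · rw [if_pos hk]
        exact Finset.prod_eq_single_of_mem i (Finset.mem_Icc.mpr ⟨hk, Fin.le_last i⟩)
          (fun b _ hb => by rw [hxval t b hb, Real.cos_zero])
      · rw [if_neg hk]
        exact Finset.prod_eq_one (fun b hb => by
          have hb' : b ≠ i := fun h => hk (h ▸ (Finset.mem_Icc.mp hb).1)
          rw [hxval t b hb', Real.cos_zero])
    rw [hKsum]
    simp only [hprodval]
    have hUsum : ∑ k, l k * ((if k ≤ i then Real.cos (x t i) else 1) - 1)
        = (∑ k ∈ Finset.Iic i, l k) * (Real.cos (x t i) - 1) := by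
      have h1 : ∀ k : Fin (m+1), l k * ((if k ≤ i then Real.cos (x t i) else 1) - 1)
          = if k ≤ i then l k * (Real.cos (x t i) - 1) else 0 := fun k => by
        split_ifs <;> ring
      rw [Finset.sum_congr rfl (fun k _ => h1 k), ← Finset.sum_filter]
      have hfil : Finset.univ.filter (· ≤ i) = Finset.Iic i := by ext k; simp
      rw [hfil, ← Finset.sum_mul]
    rw [hUsum, hyi t,
      (show x t i = 4 * Real.arctan (Real.exp (lam i * t)) by simp [hx]), cos_four_arctan]
    have hE : (0:ℝ) < 1 + Real.exp (lam i * t) ^ 2 := by positivity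
    field_simp
    linear_combination (16 * Real.exp (lam i * t) ^ 2) * hlamsq
  · -- x_i at -∞
    rw [hxifun]
    have hE : Tendsto (fun t => Real.exp (lam i * t)) atBot (𝓝 0) :=
      Real.tendsto_exp_atBot.comp (tendsto_id.const_mul_atBot hlampos)
    have h := ((Real.continuous_arctan.tendsto 0).comp hE).const_mul 4
    simpa using h
  · -- x_i at +∞
    rw [hxifun]
    have hE : Tendsto (fun t => Real.exp (lam i * t)) atTop atTop :=
      Real.tendsto_exp_atTop.comp (tendsto_id.const_mul_atTop hlampos)
    have h1 : Tendsto (fun t => Real.arctan (Real.exp (lam i * t))) atTop (𝓝 (π / 2)) :=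
      (Real.tendsto_arctan_atTop.mono_right nhdsWithin_le_nhds).comp hE
    have h := h1.const_mul 4
    convert h using 2
    ring
  · -- y limits
    intro j
    by_cases hj : j = i
    · subst hj
      have hyfun : (fun t => y t j) = fun t => l j ^ 2 *
          (4 * lam j * Real.exp (lam j * t) / (1 + Real.exp (lam j * t) ^ 2)) :=
        funext fun t => hyi t
      constructor
      · rw [hyfun]
        have hE : Tendsto (fun t => Real.exp (lam j * t)) atBot (𝓝 0) :=
          Real.tendsto_exp_atBot.comp (tendsto_id.const_mul_atBot hlampos)
        have hnum := hE.const_mul (4 * lam j)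
        have hden : Tendsto (fun t => 1 + Real.exp (lam j * t) ^ 2) atBot (𝓝 (1 + 0 ^ 2)) :=
          (hE.pow 2).const_add 1
        have h := (hnum.div hden (by norm_num)).const_mul (l j ^ 2)
        simpa using h
      · rw [hyfun]
        have heq : ∀ t, l j ^ 2 * (4 * lam j * Real.exp (-(lam j * t)) /
              (Real.exp (-(lam j * t)) ^ 2 + 1))
            = l j ^ 2 * (4 * lam j * Real.exp (lam j * t) / (1 + Real.exp (lam j * t) ^ 2)) := by
          intro t
          rw [Real.exp_neg]
          have h0 : Real.exp (lam j * t) ≠ 0 := (Real.exp_pos _).ne'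
          field_simp
        have hE : Tendsto (fun t => Real.exp (-(lam j * t))) atTop (𝓝 0) :=
          Real.tendsto_exp_atBot.comp
            (tendsto_neg_atTop_atBot.comp (tendsto_id.const_mul_atTop hlampos))
        have hnum := hE.const_mul (4 * lam j)
        have hden : Tendsto (fun t => Real.exp (-(lam j * t)) ^ 2 + 1) atTop (𝓝 (0 ^ 2 + 1)) :=
          (hE.pow 2).add_const 1
        have h := (hnum.div hden (by norm_num)).const_mul (l j ^ 2)
        have h0 : Tendsto (fun t => l j ^ 2 * (4 * lam j * Real.exp (-(lam j * t)) /
            (Real.exp (-(lam j * t)) ^ 2 + 1))) atTop (𝓝 0) := by simpa using h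
        exact Tendsto.congr heq h0
    · have hyfun : (fun t => y t j) = fun _ => (0:ℝ) := funext fun t => hyj t j hj
      rw [hyfun]
      exact ⟨tendsto_const_nhds, tendsto_const_nhds⟩
end

section
/- The Hessian matrix of U at x = 0 is the diagonal (1+m)×(1+m) matrix whose i-th diagonal entry (i = 0,...,m) is −Σ_{j=0}^i l_j; in particular it is negative definite, so x = 0 is a nondegenerate local maximum of U. -/
open Real

private lemma cosprod_deriv {m : ℕ} (s : Finset (Fin (m+1))) (x : Fin (m+1) → ℝ) :
    HasFDerivAt (fun y : Fin (m+1) → ℝ => ∏ j ∈ s, Real.cos (y j))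
      (∑ t ∈ s, (∏ u ∈ s.erase t, Real.cos (x u)) •
        ((-Real.sin (x t)) • (ContinuousLinearMap.proj t : (Fin (m+1) → ℝ) →L[ℝ] ℝ))) x := by
  apply HasFDerivAt.finset_prod (g := fun t (y : Fin (m+1) → ℝ) => Real.cos (y t))
    (g' := fun t => (-Real.sin (x t)) • (ContinuousLinearMap.proj t : (Fin (m+1) → ℝ) →L[ℝ] ℝ))
  intro t _
  have h1 : HasFDerivAt (fun y : Fin (m+1) → ℝ => y t)
      (ContinuousLinearMap.proj t : (Fin (m+1) → ℝ) →L[ℝ] ℝ) x :=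
    hasFDerivAt_apply t x
  exact (Real.hasDerivAt_cos (x t)).comp_hasFDerivAt x h1

private lemma Uderiv {m : ℕ} (l : Fin (m+1) → ℝ) (x : Fin (m+1) → ℝ) :
    HasFDerivAt (fun y : Fin (m+1) → ℝ =>
        ∑ k, l k * (∏ j ∈ Finset.Icc k (Fin.last m), Real.cos (y j) - 1))
      (∑ k, l k • (∑ t ∈ Finset.Icc k (Fin.last m),
        (∏ u ∈ (Finset.Icc k (Fin.last m)).erase t, Real.cos (x u)) •
        ((-Real.sin (x t)) • (ContinuousLinearMap.proj t : (Fin (m+1) → ℝ) →L[ℝ] ℝ)))) x := by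
  apply HasFDerivAt.fun_sum
  intro k _
  exact ((cosprod_deriv _ x).sub_const 1).const_mul (l k)

private lemma fderiv_eval {m : ℕ} (l : Fin (m+1) → ℝ) (U : (Fin (m+1) → ℝ) → ℝ)
    (hU : ∀ x, U x = ∑ k, l k * (∏ j ∈ Finset.Icc k (Fin.last m), Real.cos (x j) - 1))
    (j : Fin (m+1)) (x : Fin (m+1) → ℝ) :
    fderiv ℝ U x (Pi.single j 1) =
      ∑ k, l k * (if j ∈ Finset.Icc k (Fin.last m) then
        (∏ u ∈ (Finset.Icc k (Fin.last m)).erase j, Real.cos (x u)) * (-Real.sin (x j)) else 0) := by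
  have hU' : U = fun x => ∑ k, l k * (∏ j ∈ Finset.Icc k (Fin.last m), Real.cos (x j) - 1) :=
    funext hU
  rw [hU', (Uderiv l x).fderiv]
  simp only [ContinuousLinearMap.coe_sum', Finset.sum_apply, ContinuousLinearMap.coe_smul',
    Pi.smul_apply, ContinuousLinearMap.proj_apply, Pi.single_apply, smul_eq_mul,
    mul_ite, mul_one, mul_zero, Finset.sum_ite_eq']

private lemma second_deriv {m : ℕ} (l : Fin (m+1) → ℝ) (j : Fin (m+1)) :
    HasFDerivAt (fun x : Fin (m+1) → ℝ => ∑ k, l k * (if j ∈ Finset.Icc k (Fin.last m) then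
        (∏ u ∈ (Finset.Icc k (Fin.last m)).erase j, Real.cos (x u)) * (-Real.sin (x j)) else 0))
      ((-(∑ k ∈ Finset.Iic j, l k)) • (ContinuousLinearMap.proj j : (Fin (m+1) → ℝ) →L[ℝ] ℝ))
      0 := by
  have key : ∀ k : Fin (m+1), HasFDerivAt (fun x : Fin (m+1) → ℝ =>
        l k * (if j ∈ Finset.Icc k (Fin.last m) then
          (∏ u ∈ (Finset.Icc k (Fin.last m)).erase j, Real.cos (x u)) * (-Real.sin (x j)) else 0))
      (if k ≤ j then (-(l k)) • (ContinuousLinearMap.proj j : (Fin (m+1) → ℝ) →L[ℝ] ℝ) else 0)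
      0 := by
    intro k
    by_cases hk : k ≤ j
    · have hj : j ∈ Finset.Icc k (Fin.last m) := Finset.mem_Icc.mpr ⟨hk, Fin.le_last j⟩
      simp only [hj, if_true, hk]
      have hA := cosprod_deriv ((Finset.Icc k (Fin.last m)).erase j) (0 : Fin (m+1) → ℝ)
      have h1 : HasFDerivAt (fun y : Fin (m+1) → ℝ => y j)
          (ContinuousLinearMap.proj j : (Fin (m+1) → ℝ) →L[ℝ] ℝ) (0 : Fin (m+1) → ℝ) :=
        hasFDerivAt_apply j 0
      have hB : HasFDerivAt (fun x : Fin (m+1) → ℝ => -Real.sin (x j))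
          (-((Real.cos ((0 : Fin (m+1) → ℝ) j)) •
            (ContinuousLinearMap.proj j : (Fin (m+1) → ℝ) →L[ℝ] ℝ))) 0 :=
        ((Real.hasDerivAt_sin _).comp_hasFDerivAt 0 h1).neg
      refine ((hA.mul hB).const_mul (l k)).congr_fderiv ?_
      ext w
      simp
    · have hj : j ∉ Finset.Icc k (Fin.last m) := by
        simp only [Finset.mem_Icc]; exact fun h => hk h.1
      simp only [hj, if_false, hk, mul_zero]
      exact hasFDerivAt_const 0 0
  refine (HasFDerivAt.fun_sum (fun k (_ : k ∈ Finset.univ) => key k)).congr_fderiv ?_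
  ext w
  simp only [ContinuousLinearMap.coe_sum', Finset.sum_apply, ContinuousLinearMap.coe_smul',
    Pi.smul_apply, ContinuousLinearMap.proj_apply, smul_eq_mul]
  have : ∀ k : Fin (m+1),
      ((if k ≤ j then (-(l k)) • (ContinuousLinearMap.proj j : (Fin (m+1) → ℝ) →L[ℝ] ℝ)
        else 0) w) = if k ≤ j then -(l k) * w j else 0 := by
    intro k; by_cases hk : k ≤ j <;> simp [hk]
  rw [Finset.sum_congr rfl fun k _ => this k]
  have hset : (Finset.univ.filter (fun k : Fin (m+1) => k ≤ j)) = Finset.Iic j := by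
    ext k; simp
  rw [← Finset.sum_filter, hset, ← Finset.sum_mul]
  rw [← Finset.sum_neg_distrib]

/-- The Hessian of the toroidal-pendulum potential
`U(x) = Σ_{i=0}^m l_i (∏_{j=i}^m cos x_j − 1)` at `x = 0` is the diagonal matrix with
`i`-th diagonal entry `−Σ_{j=0}^i l_j`; in particular it is negative definite, so `x = 0`
is a nondegenerate local maximum of `U`. -/
theorem hessian_of_toroidal_potential_at_zero
    (m : ℕ) (l : Fin (m + 1) → ℝ) (hl : ∀ i, 0 < l i)
    (U : (Fin (m + 1) → ℝ) → ℝ)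
    (hU : ∀ x, U x = ∑ k, l k * (∏ j ∈ Finset.Icc k (Fin.last m), Real.cos (x j) - 1))
    (Hess : Matrix (Fin (m + 1)) (Fin (m + 1)) ℝ)
    (hHess : ∀ i j, Hess i j =
      fderiv ℝ (fun x => fderiv ℝ U x (Pi.single j 1)) 0 (Pi.single i 1)) :
    Hess = Matrix.diagonal (fun i => -(∑ j ∈ Finset.Iic i, l j)) ∧
    (∀ v : Fin (m + 1) → ℝ, v ≠ 0 → ∑ i, ∑ j, v i * Hess i j * v j < 0) ∧
    IsLocalMax U 0 := by
  have hval : ∀ i j, Hess i j = if i = j then -(∑ k ∈ Finset.Iic i, l k) else 0 := by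
    intro i j
    rw [hHess i j]
    have h1 : (fun x => fderiv ℝ U x (Pi.single j 1)) =
        fun x => ∑ k, l k * (if j ∈ Finset.Icc k (Fin.last m) then
          (∏ u ∈ (Finset.Icc k (Fin.last m)).erase j, Real.cos (x u)) * (-Real.sin (x j)) else 0) :=
      funext (fderiv_eval l U hU j)
    rw [h1, (second_deriv l j).fderiv]
    simp only [ContinuousLinearMap.coe_smul', Pi.smul_apply, ContinuousLinearMap.proj_apply,
      Pi.single_apply, smul_eq_mul]
    by_cases h : i = j
    · subst h; simp
    · simp [h, Ne.symm h]
  have hdiag : Hess = Matrix.diagonal (fun i => -(∑ j ∈ Finset.Iic i, l j)) := by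
    ext i j
    rw [hval i j, Matrix.diagonal]
    by_cases h : i = j <;> simp [h]
  refine ⟨hdiag, ?_, ?_⟩
  · intro v hv
    have hsum : ∀ i, ∑ j, v i * Hess i j * v j = -((∑ k ∈ Finset.Iic i, l k) * (v i * v i)) := by
      intro i
      rw [Finset.sum_eq_single i]
      · rw [hval i i]; simp; ring
      · intro j _ hj; rw [hval i j]; simp [Ne.symm hj]
      · intro h; exact absurd (Finset.mem_univ i) h
    rw [Finset.sum_congr rfl fun i _ => hsum i, Finset.sum_neg_distrib, neg_lt_zero]
    obtain ⟨i0, hi0⟩ := Function.ne_iff.mp hv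
    refine Finset.sum_pos' (fun i _ => mul_nonneg ?_ (mul_self_nonneg _))
      ⟨i0, Finset.mem_univ _, ?_⟩
    · exact le_of_lt (Finset.sum_pos (fun k _ => hl k) ⟨i, Finset.mem_Iic.mpr le_rfl⟩)
    · exact mul_pos (Finset.sum_pos (fun k _ => hl k) ⟨i0, Finset.mem_Iic.mpr le_rfl⟩)
        (mul_self_pos.mpr hi0)
  · have h0 : U 0 = 0 := by rw [hU]; simp
    refine Filter.Eventually.of_forall fun x => ?_
    rw [hU x, h0]
    refine Finset.sum_nonpos fun k _ =>
      mul_nonpos_iff.mpr (Or.inl ⟨(hl k).le, sub_nonpos.mpr ?_⟩)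
    calc ∏ j ∈ Finset.Icc k (Fin.last m), Real.cos (x j)
        ≤ |∏ j ∈ Finset.Icc k (Fin.last m), Real.cos (x j)| := le_abs_self _
      _ = ∏ j ∈ Finset.Icc k (Fin.last m), |Real.cos (x j)| := Finset.abs_prod _ _
      _ ≤ 1 := Finset.prod_le_one (fun j _ => abs_nonneg _) (fun j _ => Real.abs_cos_le_one _)
end

section
/- If (y,x) ∈ ℝ^{1+m} × ℝ^{1+m} is a critical point of H (i.e. the gradient of H vanishes at (y,x)) lying on the zero energy level H(y,x) = 0, then y = 0 and x_j ∈ 2πℤ for every j; conversely every such point is a critical point of H with H = 0. Thus the origin (and its lattice translates) is the only fixed point of the Hamiltonian flow on the level set H⁻¹(0). -/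
open Real

/-- A point `(y,x)` is a critical point of the toroidal-pendulum Hamiltonian
`H(y,x) = (1/2)Σ y_i²/l_i² + Σ l_i (∏_{j=i}^m cos x_j − 1)` lying on the zero energy level
if and only if `y = 0` and every `x_j ∈ 2πℤ`. -/
theorem critical_points_on_zero_level
    (m : ℕ) (l : Fin (m + 1) → ℝ) (hl : ∀ i, 0 < l i)
    (H : (Fin (m + 1) → ℝ) × (Fin (m + 1) → ℝ) → ℝ)
    (hH : ∀ p : (Fin (m + 1) → ℝ) × (Fin (m + 1) → ℝ),
      H p = (1 / 2) * ∑ k, (p.1 k) ^ 2 / (l k) ^ 2 +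
        ∑ k, l k * (∏ j ∈ Finset.Icc k (Fin.last m), Real.cos (p.2 j) - 1)) :
    ∀ y x : Fin (m + 1) → ℝ,
      (fderiv ℝ H (y, x) = 0 ∧ H (y, x) = 0) ↔
      (y = 0 ∧ ∀ j, ∃ k : ℤ, x j = 2 * Real.pi * k) := by
  intro y x
  have hFun : H = fun p : (Fin (m + 1) → ℝ) × (Fin (m + 1) → ℝ) =>
      (1 / 2) * ∑ k, (p.1 k) ^ 2 / (l k) ^ 2 +
        ∑ k, l k * (∏ j ∈ Finset.Icc k (Fin.last m), Real.cos (p.2 j) - 1) := funext hH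
  set Ek : Fin (m + 1) → ((Fin (m + 1) → ℝ) × (Fin (m + 1) → ℝ)) →L[ℝ] ℝ :=
    fun k => (ContinuousLinearMap.proj k).comp (ContinuousLinearMap.fst ℝ _ _) with hEk
  set Fj : Fin (m + 1) → ((Fin (m + 1) → ℝ) × (Fin (m + 1) → ℝ)) →L[ℝ] ℝ :=
    fun j => (ContinuousLinearMap.proj j).comp (ContinuousLinearMap.snd ℝ _ _) with hFj
  have hEd : ∀ k, HasFDerivAt (fun p : (Fin (m + 1) → ℝ) × (Fin (m + 1) → ℝ) => p.1 k)
      (Ek k) (y, x) := fun k => (Ek k).hasFDerivAt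
  have hFd : ∀ j, HasFDerivAt (fun p : (Fin (m + 1) → ℝ) × (Fin (m + 1) → ℝ) => p.2 j)
      (Fj j) (y, x) := fun j => (Fj j).hasFDerivAt
  have hcos : ∀ j, HasFDerivAt
      (fun p : (Fin (m + 1) → ℝ) × (Fin (m + 1) → ℝ) => Real.cos (p.2 j))
      ((-Real.sin (x j)) • Fj j) (y, x) :=
    fun j => by have := (Real.hasDerivAt_cos (x j)).comp_hasFDerivAt (y, x) (hFd j); exact this
  obtain ⟨D, hD, hDval, hDzero⟩ :
      ∃ D : ((Fin (m + 1) → ℝ) × (Fin (m + 1) → ℝ)) →L[ℝ] ℝ,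
        HasFDerivAt H D (y, x) ∧
        (∀ k, D (Pi.single k 1, 0) = y k / (l k) ^ 2) ∧
        ((∀ j, Real.sin (x j) = 0) → y = 0 → D = 0) := by
    refine ⟨(1 / 2 : ℝ) • (∑ k, ((((2 : ℕ) : ℝ) * y k ^ (2 - 1)) / (l k) ^ 2) • Ek k) +
      ∑ k, l k • ∑ j ∈ Finset.Icc k (Fin.last m),
        (∏ i ∈ (Finset.Icc k (Fin.last m)).erase j, Real.cos (x i)) •
          ((-Real.sin (x j)) • Fj j), ?_, ?_, ?_⟩
    · rw [hFun]
      exact HasFDerivAt.add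
        (HasFDerivAt.const_mul (HasFDerivAt.fun_sum fun k _ =>
          ((hasDerivAt_pow 2 (y k)).div_const ((l k) ^ 2)).comp_hasFDerivAt (y, x) (hEd k)) (1 / 2))
        (HasFDerivAt.fun_sum fun k _ =>
          (((HasFDerivAt.finset_prod fun j _ => hcos j).sub_const 1).const_mul (l k)))
    · intro k
      have hlk : (l k) ^ 2 ≠ 0 := pow_ne_zero _ (hl k).ne'
      simp [hEk, hFj, Pi.single_apply, mul_ite, Finset.sum_ite_eq']
      ring
    · intro hsin hy0
      ext p
      · simp [hEk, hFj, hsin, hy0]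
      · simp [hEk, hFj, hsin, hy0]
  constructor
  · rintro ⟨hf0, h0⟩
    have hDeq : D = 0 := by rw [← hD.fderiv]; exact hf0
    have hy : y = 0 := by
      funext k
      have h1 := hDval k
      rw [hDeq] at h1
      simp only [ContinuousLinearMap.zero_apply] at h1
      have h2 := h1.symm
      rcases div_eq_zero_iff.mp h2 with h | h
      · simpa using h
      · exact absurd h (pow_ne_zero _ (hl k).ne')
    subst hy
    rw [hH] at h0
    have hsum : ∑ k, l k * (∏ j ∈ Finset.Icc k (Fin.last m), Real.cos (x j) - 1) = 0 := by
      simpa using h0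
    have hnp : ∀ k ∈ (Finset.univ : Finset (Fin (m + 1))),
        l k * (∏ j ∈ Finset.Icc k (Fin.last m), Real.cos (x j) - 1) ≤ 0 := by
      intro k _
      apply mul_nonpos_of_nonneg_of_nonpos (hl k).le
      have hle : ∏ j ∈ Finset.Icc k (Fin.last m), Real.cos (x j) ≤ 1 := by
        calc ∏ j ∈ Finset.Icc k (Fin.last m), Real.cos (x j)
            ≤ |∏ j ∈ Finset.Icc k (Fin.last m), Real.cos (x j)| := le_abs_self _
          _ = ∏ j ∈ Finset.Icc k (Fin.last m), |Real.cos (x j)| := Finset.abs_prod _ _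
          _ ≤ 1 := Finset.prod_le_one (fun _ _ => abs_nonneg _)
              (fun j _ => Real.abs_cos_le_one _)
      linarith
    have hP : ∀ k : Fin (m + 1),
        ∏ j ∈ Finset.Icc k (Fin.last m), Real.cos (x j) = 1 := by
      intro k
      have hk := (Finset.sum_eq_zero_iff_of_nonpos hnp).mp hsum k (Finset.mem_univ k)
      rcases mul_eq_zero.mp hk with h | h
      · exact absurd h (hl k).ne'
      · linarith
    have hIoc : ∀ j : Fin (m + 1),
        ∏ i ∈ Finset.Ioc j (Fin.last m), Real.cos (x i) = 1 := by
      intro j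
      by_cases hj : j = Fin.last m
      · subst hj; simp
      · have hlt : j < Fin.last m := lt_of_le_of_ne (Fin.le_last j) hj
        have hset : Finset.Ioc j (Fin.last m) = Finset.Icc (j + 1) (Fin.last m) := by
          ext i
          simp only [Finset.mem_Ioc, Finset.mem_Icc, Fin.le_last, and_true]
          rw [Fin.lt_def, Fin.le_def, Fin.val_add_one_of_lt hlt]
          omega
        rw [hset]
        exact hP _
    have hcos1 : ∀ j, Real.cos (x j) = 1 := by
      intro j
      have h1 := hP j
      rw [Finset.Icc_eq_cons_Ioc (Fin.le_last j), Finset.prod_cons, hIoc j, mul_one] at h1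
      exact h1
    refine ⟨rfl, fun j => ?_⟩
    obtain ⟨n, hn⟩ := (Real.cos_eq_one_iff (x j)).mp (hcos1 j)
    exact ⟨n, by rw [← hn]; ring⟩
  · rintro ⟨hy, hx⟩
    have hsin : ∀ j, Real.sin (x j) = 0 := by
      intro j
      obtain ⟨n, hn⟩ := hx j
      have hxj : x j = ((2 * n : ℤ) : ℝ) * π := by push_cast; rw [hn]; ring
      rw [hxj]
      exact Real.sin_int_mul_pi _
    have hcos1 : ∀ j, Real.cos (x j) = 1 := by
      intro j
      obtain ⟨n, hn⟩ := hx j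
      have hxj : x j = (n : ℝ) * (2 * π) := by rw [hn]; ring
      rw [hxj]
      exact Real.cos_int_mul_two_pi n
    refine ⟨?_, ?_⟩
    · rw [hD.fderiv]
      exact hDzero hsin hy
    · rw [hH]
      simp [hy, hcos1]
end

section
/- There exists a constant C > 0 (depending only on m and l_0,...,l_m) such that for all x ∈ ℝ and all z = (z_1,...,z_m) ∈ ℝ^m with ‖z‖ ≤ 1, one has | U(x, z_1, ..., z_m) − l_0·(cos x − 1) + Σ_{i=1}^m (l_0·cos x + Σ_{j=1}^i l_j)·z_i²/2 | ≤ C·‖z‖⁴, where ‖·‖ is the Euclidean norm; i.e. the potential admits the uniform-in-x expansion U = l_0(cos x − 1) − Σ_{i=1}^m (l_0 cos x + Σ_{j=1}^i l_j) z_i²/2 + O(‖z‖⁴). -/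
open Real


lemma abs_one_sub_prod_cos {α : Type*} [DecidableEq α] (s : Finset α) (f : α → ℝ) :
    |1 - ∏ i ∈ s, Real.cos (f i)| ≤ ∑ i ∈ s, (f i) ^ 2 / 2 := by
  induction s using Finset.induction_on with
  | empty => simp
  | insert a s ha ih =>
    rw [Finset.prod_insert ha, Finset.sum_insert ha]
    have h1 : 1 - (f a) ^ 2 / 2 ≤ Real.cos (f a) := Real.one_sub_sq_div_two_le_cos
    have h2 : Real.cos (f a) ≤ 1 := Real.cos_le_one _
    have h3 : |Real.cos (f a)| ≤ 1 := Real.abs_cos_le_one (f a)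
    have key : 1 - Real.cos (f a) * ∏ i ∈ s, Real.cos (f i)
        = (1 - Real.cos (f a)) + Real.cos (f a) * (1 - ∏ i ∈ s, Real.cos (f i)) := by ring
    rw [key]
    calc |(1 - Real.cos (f a)) + Real.cos (f a) * (1 - ∏ i ∈ s, Real.cos (f i))|
        ≤ |1 - Real.cos (f a)| + |Real.cos (f a)| * |1 - ∏ i ∈ s, Real.cos (f i)| := by
          rw [← abs_mul]; exact abs_add_le _ _
      _ ≤ (f a) ^ 2 / 2 + ∑ i ∈ s, (f i) ^ 2 / 2 := by
          have h4 : |1 - Real.cos (f a)| ≤ (f a) ^ 2 / 2 := by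
            rw [abs_of_nonneg (by linarith)]; linarith
          nlinarith [abs_nonneg (1 - ∏ i ∈ s, Real.cos (f i))]

lemma abs_prod_cos_le_one {α : Type*} (s : Finset α) (f : α → ℝ) :
    |∏ i ∈ s, Real.cos (f i)| ≤ 1 := by
  rw [Finset.abs_prod]
  exact Finset.prod_le_one (fun i _ => abs_nonneg _) (fun i _ => Real.abs_cos_le_one _)

lemma prod_cos_quad {α : Type*} [DecidableEq α] (s : Finset α) (f : α → ℝ)
    (hf : ∀ i ∈ s, |f i| ≤ 1) :
    |∏ i ∈ s, Real.cos (f i) - 1 + ∑ i ∈ s, (f i) ^ 2 / 2|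
      ≤ (∑ i ∈ s, (f i) ^ 2 / 2) ^ 2 := by
  induction s using Finset.induction_on with
  | empty => simp
  | insert a s ha ih =>
    have hfa : |f a| ≤ 1 := hf a (Finset.mem_insert_self a s)
    have ih' := ih (fun i hi => hf i (Finset.mem_insert_of_mem hi))
    rw [Finset.prod_insert ha, Finset.sum_insert ha]
    set P := ∏ i ∈ s, Real.cos (f i) with hP
    set S := ∑ i ∈ s, (f i) ^ 2 / 2 with hS
    have hS0 : 0 ≤ S := Finset.sum_nonneg fun i _ => by positivity
    have hA : |1 - P| ≤ S := abs_one_sub_prod_cos s f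
    have hP1 : |P| ≤ 1 := abs_prod_cos_le_one s f
    have hcb : |Real.cos (f a) - (1 - (f a) ^ 2 / 2)| ≤ |f a| ^ 4 * (5 / 96) :=
      Real.cos_bound hfa
    have key : Real.cos (f a) * P - 1 + ((f a) ^ 2 / 2 + S)
        = (P - 1 + S) + ((f a) ^ 2 / 2) * (1 - P)
          + (Real.cos (f a) - (1 - (f a) ^ 2 / 2)) * P := by ring
    rw [key]
    have h4 : |f a| ^ 4 = (f a) ^ 4 := by
      rw [← abs_pow, abs_of_nonneg (by positivity)]
    calc |(P - 1 + S) + ((f a) ^ 2 / 2) * (1 - P)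
          + (Real.cos (f a) - (1 - (f a) ^ 2 / 2)) * P|
        ≤ |P - 1 + S| + ((f a) ^ 2 / 2) * |1 - P|
          + |Real.cos (f a) - (1 - (f a) ^ 2 / 2)| * |P| := by
          have := abs_add_le (P - 1 + S + ((f a) ^ 2 / 2) * (1 - P))
            ((Real.cos (f a) - (1 - (f a) ^ 2 / 2)) * P)
          have h5 := abs_add_le (P - 1 + S) (((f a) ^ 2 / 2) * (1 - P))
          rw [abs_mul] at this
          rw [abs_mul, abs_of_nonneg (show (0:ℝ) ≤ (f a)^2/2 by positivity)] at h5
          linarith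
      _ ≤ ((f a) ^ 2 / 2 + S) ^ 2 := by
          nlinarith [abs_nonneg (Real.cos (f a) - (1 - (f a) ^ 2 / 2)), sq_nonneg (f a)]

lemma Icc_succ_last_eq (m : ℕ) (i : Fin m) :
    Finset.Icc (Fin.succ i) (Fin.last m) = Finset.map (Fin.succEmb m) (Finset.Ici i) := by
  ext j
  simp only [Finset.mem_Icc, Finset.mem_map, Finset.mem_Ici, Fin.coe_succEmb]
  constructor
  · rintro ⟨h1, _⟩
    have hj0 : j ≠ 0 := by
      intro h; rw [h] at h1
      exact absurd (Fin.le_def.mp h1) (by simp [Fin.val_succ])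
    refine ⟨j.pred hj0, ?_, Fin.succ_pred j hj0⟩
    have := Fin.le_def.mp h1
    rw [Fin.le_def]
    simp only [Fin.val_succ] at this ⊢
    simp [Fin.coe_pred]
    omega
  · rintro ⟨t, ht, rfl⟩
    exact ⟨Fin.succ_le_succ_iff.mpr ht, Fin.le_last _⟩

/-- Uniform-in-`x` quartic expansion of the toroidal-pendulum potential:
`U(x,z) = l₀(cos x − 1) − Σ_{i=1}^m (l₀ cos x + Σ_{j=1}^i l_j) z_i²/2 + O(‖z‖⁴)`
for `‖z‖ ≤ 1`, where `‖z‖` is the Euclidean norm. -/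
theorem toroidal_potential_quartic_expansion
    (m : ℕ) (hm : 1 ≤ m) (l : Fin (m + 1) → ℝ) (hl : ∀ i, 0 < l i)
    (U : (Fin (m + 1) → ℝ) → ℝ)
    (hU : ∀ x, U x = ∑ k, l k * (∏ j ∈ Finset.Icc k (Fin.last m), Real.cos (x j) - 1)) :
    ∃ C > 0, ∀ (x : ℝ) (z : Fin m → ℝ),
      Real.sqrt (∑ i, (z i) ^ 2) ≤ 1 →
      |U (Fin.cons x z) - l 0 * (Real.cos x - 1) +
        ∑ i : Fin m, (l 0 * Real.cos x + ∑ j ∈ Finset.Iic i, l j.succ) * (z i) ^ 2 / 2|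
        ≤ C * (Real.sqrt (∑ i, (z i) ^ 2)) ^ 4 := by
  refine ⟨∑ k, l k, Finset.sum_pos (fun k _ => hl k) Finset.univ_nonempty, ?_⟩
  intro x z hz
  set N := ∑ i, (z i) ^ 2 with hN
  have hN0 : 0 ≤ N := Finset.sum_nonneg fun i _ => sq_nonneg _
  have hsq : Real.sqrt N ^ 2 = N := Real.sq_sqrt hN0
  have hN1 : N ≤ 1 := by nlinarith [Real.sqrt_nonneg N]
  have hs4 : Real.sqrt N ^ 4 = N ^ 2 := by
    rw [show (4 : ℕ) = 2 * 2 from rfl, pow_mul, hsq]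
  have hz1 : ∀ i, |z i| ≤ 1 := by
    intro i
    have h1 : (z i) ^ 2 ≤ N :=
      Finset.single_le_sum (fun j _ => sq_nonneg (z j)) (Finset.mem_univ i)
    rw [abs_le]; constructor <;> nlinarith
  rw [hU, Fin.sum_univ_succ]
  -- term at 0
  have hIcc0 : Finset.Icc (0 : Fin (m + 1)) (Fin.last m) = Finset.univ := by
    ext j; simp [Fin.zero_le, Fin.le_last]
  have hprod0 : ∏ j ∈ Finset.Icc (0 : Fin (m + 1)) (Fin.last m),
      Real.cos (Fin.cons (α := fun _ => ℝ) x z j) = Real.cos x * ∏ i : Fin m, Real.cos (z i) := by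
    rw [hIcc0, Fin.prod_univ_succ]
    simp [Fin.cons_zero, Fin.cons_succ]
  have hprodk : ∀ i : Fin m, ∏ j ∈ Finset.Icc (Fin.succ i) (Fin.last m),
      Real.cos (Fin.cons (α := fun _ => ℝ) x z j) = ∏ t ∈ Finset.Ici i, Real.cos (z t) := by
    intro i
    rw [Icc_succ_last_eq, Finset.prod_map]
    simp [Fin.coe_succEmb, Fin.cons_succ]
  rw [hprod0]
  rw [Finset.sum_congr rfl fun i _ => by rw [hprodk i]]
  set Q := ∏ i : Fin m, Real.cos (z i) with hQ
  set P : Fin m → ℝ := fun i => ∏ t ∈ Finset.Ici i, Real.cos (z t) with hP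
  set S : Fin m → ℝ := fun i => ∑ t ∈ Finset.Ici i, (z t) ^ 2 / 2 with hS
  have hhalf : ∑ i : Fin m, (z i) ^ 2 / 2 = N / 2 := by
    rw [hN, ← Finset.sum_div]
  -- the swap identity
  have hswap : ∑ i : Fin m, l i.succ * S i
      = ∑ i : Fin m, (∑ j ∈ Finset.Iic i, l j.succ) * ((z i) ^ 2 / 2) := by
    simp only [hS, Finset.mul_sum]
    rw [Finset.sum_comm' (t' := Finset.univ) (s' := fun t => Finset.Iic t)
      (fun i t => by simp [Finset.mem_Ici, Finset.mem_Iic])]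
    exact Finset.sum_congr rfl fun t _ => by rw [Finset.sum_mul]
  -- algebraic regrouping
  have hkey : l 0 * (Real.cos x * Q - 1) +
      (∑ i : Fin m, l i.succ * (P i - 1)) - l 0 * (Real.cos x - 1) +
      ∑ i : Fin m, (l 0 * Real.cos x + ∑ j ∈ Finset.Iic i, l j.succ) * (z i) ^ 2 / 2
      = l 0 * Real.cos x * (Q - 1 + N / 2)
        + ∑ i : Fin m, l i.succ * (P i - 1 + S i) := by
    have e1 : ∑ i : Fin m, (l 0 * Real.cos x + ∑ j ∈ Finset.Iic i, l j.succ) * (z i) ^ 2 / 2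
        = l 0 * Real.cos x * (N / 2)
          + ∑ i : Fin m, (∑ j ∈ Finset.Iic i, l j.succ) * ((z i) ^ 2 / 2) := by
      rw [Finset.sum_congr rfl fun i _ => show
          (l 0 * Real.cos x + ∑ j ∈ Finset.Iic i, l j.succ) * (z i) ^ 2 / 2
          = l 0 * Real.cos x * ((z i) ^ 2 / 2)
            + (∑ j ∈ Finset.Iic i, l j.succ) * ((z i) ^ 2 / 2) by ring,
        Finset.sum_add_distrib, ← Finset.mul_sum, hhalf]
    have e2 : ∑ i : Fin m, l i.succ * (P i - 1 + S i)
        = (∑ i : Fin m, l i.succ * (P i - 1)) + ∑ i : Fin m, l i.succ * S i := by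
      rw [← Finset.sum_add_distrib]
      exact Finset.sum_congr rfl fun i _ => by ring
    rw [e1, e2, hswap]; ring
  rw [hkey]
  -- bounds
  have hSle : ∀ i : Fin m, S i ≤ N / 2 := by
    intro i
    rw [hS, ← hhalf]
    exact Finset.sum_le_sum_of_subset_of_nonneg (Finset.subset_univ _)
      (fun t _ _ => by positivity)
  have hS0 : ∀ i : Fin m, 0 ≤ S i := fun i =>
    Finset.sum_nonneg fun t _ => by positivity
  have hQb : |Q - 1 + N / 2| ≤ (N / 2) ^ 2 := by
    have := prod_cos_quad Finset.univ z (fun i _ => hz1 i)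
    rwa [hhalf] at this
  have hPb : ∀ i : Fin m, |P i - 1 + S i| ≤ (N / 2) ^ 2 := by
    intro i
    have h1 := prod_cos_quad (Finset.Ici i) z (fun t _ => hz1 t)
    calc |P i - 1 + S i| ≤ (S i) ^ 2 := h1
      _ ≤ (N / 2) ^ 2 := pow_le_pow_left₀ (hS0 i) (hSle i) 2
  have hsum : ∑ k, l k = l 0 + ∑ i : Fin m, l i.succ := Fin.sum_univ_succ l
  calc |l 0 * Real.cos x * (Q - 1 + N / 2) + ∑ i : Fin m, l i.succ * (P i - 1 + S i)|
      ≤ |l 0 * Real.cos x * (Q - 1 + N / 2)|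
        + ∑ i : Fin m, |l i.succ * (P i - 1 + S i)| :=
        le_trans (abs_add_le _ _) (by gcongr; exact Finset.abs_sum_le_sum_abs _ _)
    _ ≤ l 0 * (N / 2) ^ 2 + ∑ i : Fin m, l i.succ * (N / 2) ^ 2 := by
        gcongr with i hi
        · rw [abs_mul, abs_mul, abs_of_nonneg (hl 0).le]
          have h1 : |Real.cos x| ≤ 1 := Real.abs_cos_le_one x
          have h2 := hQb
          calc l 0 * |Real.cos x| * |Q - 1 + N / 2|
              ≤ l 0 * 1 * ((N / 2) ^ 2) := by
                gcongr
                all_goals first | exact mul_nonneg (hl 0).le zero_le_one | exact (hl 0).le | positivity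
            _ = l 0 * (N / 2) ^ 2 := by ring
        · rw [abs_mul, abs_of_nonneg (hl i.succ).le]
          exact mul_le_mul_of_nonneg_left (hPb i) (hl i.succ).le
    _ = (∑ k, l k) * (N / 2) ^ 2 := by rw [hsum, ← Finset.sum_mul]; ring
    _ ≤ (∑ k, l k) * (Real.sqrt N) ^ 4 := by
        rw [hs4]
        have hC : 0 ≤ ∑ k, l k := Finset.sum_nonneg fun k _ => (hl k).le
        have : (N / 2) ^ 2 ≤ N ^ 2 := by nlinarith
        exact mul_le_mul_of_nonneg_left this hC
end

section
/- Let l > 1 and let a : ℝ → ℝ be continuous with l − 1 ≤ a(t) ≤ l + 1 for all t. Suppose λ : ℝ → ℝ is differentiable and solves the Riccati equation λ'(t) = a(t) − λ(t)²/l². If λ(t₀) ∈ [l·√(l−1), l·√(l+1)] for some t₀, then λ(t) ∈ [l·√(l−1), l·√(l+1)] for all t ≥ t₀; i.e. the interval [l·√(l−1), l·√(l+1)] is forward invariant for this Riccati equation. -/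
/-!
Both endpoints are barriers for `λ' = a - λ²/l²`. Above `l√(l+1)` we have `λ²/l² > l + 1 ≥ a`, so
`λ` decreases there; on `(-l√(l-1), l√(l-1))` we have `λ²/l² < l - 1 ≤ a`, so `λ` increases there.
A solution leaving the interval would have to cross one of these bands against the sign of its
derivative, which the mean value theorem on the crossing time interval forbids.
-/

open Real Set

theorem stays_ge_of_deriv_nonneg_on_Ioo {f f' : ℝ → ℝ} {c M t₀ : ℝ}
    (hf : ∀ t, HasDerivAt f (f' t) t) (hcM : c < M) (hf' : ∀ t, f t ∈ Ioo c M → 0 ≤ f' t)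
    (h₀ : M ≤ f t₀) : ∀ t ≥ t₀, M ≤ f t := by
  have hcont : Continuous f := continuous_iff_continuousAt.2 fun t => (hf t).continuousAt
  intro t₁ ht₁
  by_contra! hlt
  -- `s` is the last time in `[t₀, t₁]` with `M ≤ f`, `u` the first later time with `f ≤ max c (f t₁)`;
  -- in between, `f` stays in the band `(c, M)`.
  obtain ⟨s, ⟨hs, hMs⟩, hs_max⟩ :=
    (isCompact_Icc.inter_right (isClosed_le continuous_const hcont)).exists_isGreatest
      (⟨t₀, ⟨le_rfl, ht₁⟩, h₀⟩ : (Icc t₀ t₁ ∩ {t | M ≤ f t}).Nonempty)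
  obtain ⟨u, ⟨hu, hfu⟩, hu_min⟩ :=
    (isCompact_Icc.inter_right (isClosed_le hcont continuous_const)).exists_isLeast
      (⟨t₁, ⟨hs.2, le_rfl⟩, show f t₁ ≤ _ from le_max_right _ _⟩ :
        (Icc s t₁ ∩ {t | f t ≤ max c (f t₁)}).Nonempty)
  have hband : ∀ t ∈ Ioo s u, f t ∈ Ioo c M := by
    intro t ht
    constructor
    · by_contra! hle
      exact ht.2.not_ge (hu_min ⟨⟨ht.1.le, ht.2.le.trans hu.2⟩, hle.trans (le_max_left _ _)⟩)
    · by_contra! hge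
      exact ht.1.not_ge (hs_max ⟨⟨hs.1.trans ht.1.le, ht.2.le.trans hu.2⟩, hge⟩)
  have hmono : MonotoneOn f (Icc s u) :=
    monotoneOn_of_hasDerivWithinAt_nonneg (convex_Icc s u) hcont.continuousOn
      (fun t _ => (hf t).hasDerivWithinAt)
      (fun t ht => hf' t (hband t (by rwa [interior_Icc] at ht)))
  exact lt_irrefl M <| calc
    M ≤ f s := hMs
    _ ≤ f u := hmono (left_mem_Icc.2 hu.1) (right_mem_Icc.2 hu.1) hu.1
    _ ≤ max c (f t₁) := hfu
    _ < M := max_lt hcM hlt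

theorem stays_le_of_deriv_nonpos_on_Ioo {f f' : ℝ → ℝ} {c M t₀ : ℝ}
    (hf : ∀ t, HasDerivAt f (f' t) t) (hMc : M < c) (hf' : ∀ t, f t ∈ Ioo M c → f' t ≤ 0)
    (h₀ : f t₀ ≤ M) : ∀ t ≥ t₀, f t ≤ M := by
  intro t ht
  have hneg := stays_ge_of_deriv_nonneg_on_Ioo (f := -f) (f' := -f') (fun t => (hf t).neg)
    (neg_lt_neg hMc) (fun t ht => by
      simp only [Pi.neg_apply, mem_Ioo] at ht ⊢
      exact neg_nonneg.2 (hf' t ⟨by linarith, by linarith⟩))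
    (neg_le_neg h₀) t ht
  exact neg_le_neg_iff.1 hneg

theorem sq_div_sq_le_of_mem_Icc {l b x : ℝ} (hb : 0 ≤ b)
    (hx : x ∈ Icc (-(l * √b)) (l * √b)) : x ^ 2 / l ^ 2 ≤ b := by
  have hsq : x ^ 2 ≤ l ^ 2 * b := by
    simpa [mul_pow, Real.sq_sqrt hb] using sq_le_sq' hx.1 hx.2
  rcases eq_or_ne l 0 with rfl | hl
  · simpa using hb
  · rwa [div_le_iff₀ (by positivity), mul_comm]

theorem le_sq_div_sq_of_le {l b x : ℝ} (hl : 0 < l) (hb : 0 ≤ b) (hx : l * √b ≤ x) :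
    b ≤ x ^ 2 / l ^ 2 := by
  have hsq : l ^ 2 * b ≤ x ^ 2 := by
    simpa [mul_pow, Real.sq_sqrt hb] using pow_le_pow_left₀ (by positivity) hx 2
  rwa [le_div_iff₀ (by positivity), mul_comm]

theorem riccati_interval_forward_invariant_general
    (l : ℝ) (hl : 1 < l)
    (a : ℝ → ℝ)
    (hab : ∀ t, l - 1 ≤ a t ∧ a t ≤ l + 1)
    (lam : ℝ → ℝ)
    (hlam : ∀ t, HasDerivAt lam (a t - (lam t) ^ 2 / l ^ 2) t)
    (t₀ : ℝ)
    (h₀ : lam t₀ ∈ Set.Icc (l * Real.sqrt (l - 1)) (l * Real.sqrt (l + 1))) :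
    ∀ t ≥ t₀, lam t ∈ Set.Icc (l * Real.sqrt (l - 1)) (l * Real.sqrt (l + 1)) := by
  have hm : 0 < l * √(l - 1) := mul_pos (by linarith) (sqrt_pos.2 (by linarith))
  intro t ht
  constructor
  · refine stays_ge_of_deriv_nonneg_on_Ioo hlam (neg_lt_self hm) (fun u hu => ?_) h₀.1 t ht
    linarith [sq_div_sq_le_of_mem_Icc (by linarith) (Ioo_subset_Icc_self hu), (hab u).1]
  · refine stays_le_of_deriv_nonpos_on_Ioo hlam (lt_add_one _) (fun u hu => ?_) h₀.2 t ht
    linarith [le_sq_div_sq_of_le (by linarith) (by linarith) hu.1.le, (hab u).2]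

/-- Forward invariance of the interval `[l√(l−1), l√(l+1)]` for the Riccati
equation `λ' = a(t) − λ²/l²` when `l − 1 ≤ a(t) ≤ l + 1` and `l > 1`. -/
theorem riccati_interval_forward_invariant
    (l : ℝ) (hl : 1 < l)
    (a : ℝ → ℝ) (ha : Continuous a)
    (hab : ∀ t, l - 1 ≤ a t ∧ a t ≤ l + 1)
    (lam : ℝ → ℝ)
    (hlam : ∀ t, HasDerivAt lam (a t - (lam t) ^ 2 / l ^ 2) t)
    (t₀ : ℝ)
    (h₀ : lam t₀ ∈ Set.Icc (l * Real.sqrt (l - 1)) (l * Real.sqrt (l + 1))) :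
    ∀ t ≥ t₀, lam t ∈ Set.Icc (l * Real.sqrt (l - 1)) (l * Real.sqrt (l + 1)) :=
  riccati_interval_forward_invariant_general l hl a hab lam hlam t₀ h₀
end

section
/- Let a : ℝ → ℝ be continuous with 0 < c ≤ a(t) ≤ C for all t ∈ ℝ. Then there exists a twice continuously differentiable function z : ℝ → ℝ, not identically zero, such that z''(t) = a(t)·z(t) for all t, z(t) > 0 and z'(t) > 0 for all t, and z(t) → 0 and z'(t) → 0 as t → −∞. -/
open Real Filter

open Set MeasureTheory intervalIntegral BoundedContinuousFunction

lemma hasDerivAt_expk (k : ℝ) (hk : k ≠ 0) (s : ℝ) :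
    HasDerivAt (fun x => Real.exp (k*x) / k) (Real.exp (k*s)) s := by
  have h1 : HasDerivAt (fun x => Real.exp (k*x)) (Real.exp (k*s) * k) s := by
    simpa [mul_comm, Function.comp_def] using (Real.hasDerivAt_exp (k*s)).comp s ((hasDerivAt_id s).const_mul k)
  simpa [mul_div_assoc, mul_div_cancel_right₀ _ hk] using h1.div_const k

lemma continuous_expk (k : ℝ) : Continuous (fun s => Real.exp (k*s)) :=
  Real.continuous_exp.comp (continuous_const.mul continuous_id)

lemma intervalIntegral_expk (k : ℝ) (hk : k ≠ 0) (y t : ℝ) :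
    ∫ s in y..t, Real.exp (k*s) = Real.exp (k*t)/k - Real.exp (k*y)/k :=
  intervalIntegral.integral_eq_sub_of_hasDerivAt (fun s _ => hasDerivAt_expk k hk s)
    ((continuous_expk k).intervalIntegrable y t)

lemma expk_integrableOn (k : ℝ) (hk : 0 < k) (t : ℝ) :
    IntegrableOn (fun s => Real.exp (k*s)) (Iic t) := by
  refine integrableOn_Iic_of_intervalIntegral_norm_bounded (Real.exp (k*t)/k) t
    (fun y => ((continuous_expk k).integrableOn_Ioc)) tendsto_id ?_
  filter_upwards with y
  simp_rw [Real.norm_of_nonneg (Real.exp_pos _).le, intervalIntegral_expk k hk.ne']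
  have h1 : 0 ≤ Real.exp (k * (id y : ℝ)) / k := by positivity
  linarith

lemma integral_expk_Iic (k : ℝ) (hk : 0 < k) (t : ℝ) :
    ∫ s in Iic t, Real.exp (k*s) = Real.exp (k*t)/k := by
  refine tendsto_nhds_unique
    (intervalIntegral_tendsto_integral_Iic _ (expk_integrableOn k hk t) tendsto_id) ?_
  simp_rw [intervalIntegral_expk k hk.ne']
  have h1 : Tendsto (fun y : ℝ => Real.exp (k*y)/k) atBot (nhds 0) := by
    have h2 : Tendsto (fun y : ℝ => k*y) atBot atBot :=
      (tendsto_const_mul_atBot_of_pos hk).2 tendsto_id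
    simpa using ((Real.tendsto_exp_atBot.comp h2).div_const k)
  simpa using (tendsto_const_nhds.sub h1)

lemma riccati_exists (a : ℝ → ℝ) (ha : Continuous a)
    (c C : ℝ) (hc : 0 < c) (hbound : ∀ t, c ≤ a t ∧ a t ≤ C) :
    ∃ u : ℝ → ℝ, Continuous u ∧
      (∃ m B : ℝ, 0 < m ∧ ∀ t, m ≤ u t ∧ u t ≤ B) ∧
      ∀ t, HasDerivAt u (a t - (u t)^2) t := by
  have hcC : c ≤ C := le_trans (hbound 0).1 (hbound 0).2
  have hccC : 0 < c + C := by linarith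
  set M : ℝ := Real.sqrt ((c+C)/2) with hMdef
  have hM2 : M^2 = (c+C)/2 := Real.sq_sqrt (by linarith)
  have hMpos : 0 < M := Real.sqrt_pos.2 (by linarith)
  set k : ℝ := 2*M with hkdef
  have hkpos : 0 < k := by positivity
  set R : ℝ := (C-c)/k with hRdef
  have hRnn : 0 ≤ R := div_nonneg (by linarith) hkpos.le
  have hkR : k*R = C - c := mul_div_cancel₀ _ hkpos.ne'
  have hk2 : k^2 = 2*(c+C) := by rw [hkdef]; nlinarith [hM2]
  have hR2 : 2*R^2 ≤ C - c := by
    have h1 : 2*R^2*k^2 ≤ (C-c)*k^2 := by nlinarith [hkR, hk2, sq_nonneg (C-c)]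
    have h2 : 0 < k^2 := by positivity
    exact le_of_mul_le_mul_right h1 h2
  -- the integrand
  set g : (ℝ →ᵇ ℝ) → ℝ → ℝ := fun u s => a s + M^2 - (u s - M)^2 with hgdef
  have hg_cont : ∀ u : ℝ →ᵇ ℝ, Continuous fun s => Real.exp (k*s) * g u s := fun u =>
    (continuous_expk k).mul
      ((ha.add continuous_const).sub ((u.continuous.sub continuous_const).pow 2))
  have hg_abs : ∀ (u : ℝ →ᵇ ℝ), (∀ s, |u s - M| ≤ R) → ∀ s, |g u s - 2*M^2| ≤ k*R := by
    intro u hu s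
    have h1 := (hbound s).1; have h2 := (hbound s).2
    have h3 : (u s - M)^2 ≤ R^2 :=
      sq_le_sq' (by linarith [(abs_le.mp (hu s)).1]) ((abs_le.mp (hu s)).2)
    have h4 : 0 ≤ (u s - M)^2 := sq_nonneg _
    simp only [hgdef]
    rw [abs_le]
    constructor
    · linarith [hM2, hR2, hkR]
    · linarith [hM2, hR2, hkR]
  have hg_norm : ∀ (u : ℝ →ᵇ ℝ), (∀ s, |u s - M| ≤ R) → ∀ s,
      ‖Real.exp (k*s) * g u s‖ ≤ (2*M^2 + k*R) * Real.exp (k*s) := by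
    intro u hu s
    rw [norm_mul, Real.norm_of_nonneg (Real.exp_pos _).le, Real.norm_eq_abs, mul_comm]
    have h1 : |g u s| ≤ 2*M^2 + k*R := by
      have := hg_abs u hu s
      have h2 := abs_abs_sub_abs_le_abs_sub (g u s) (2*M^2)
      have h3 : |(2:ℝ)*M^2| = 2*M^2 := abs_of_pos (by positivity)
      calc |g u s| = |g u s| - |2*M^2| + |2*M^2| := by ring
        _ ≤ |g u s - 2*M^2| + |2*M^2| := by
            have := abs_sub_abs_le_abs_sub (g u s) (2*M^2); linarith
        _ ≤ 2*M^2 + k*R := by rw [h3]; linarith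
    exact mul_le_mul_of_nonneg_right h1 (Real.exp_pos _).le
  have hInt : ∀ (u : ℝ →ᵇ ℝ), (∀ s, |u s - M| ≤ R) → ∀ t,
      IntegrableOn (fun s => Real.exp (k*s) * g u s) (Iic t) := by
    intro u hu t
    refine Integrable.mono' ((expk_integrableOn k hkpos t).const_mul (2*M^2 + k*R))
      ((hg_cont u).aestronglyMeasurable) ?_
    exact ae_of_all _ fun s => hg_norm u hu s
  set Tf : (ℝ →ᵇ ℝ) → ℝ → ℝ :=
    fun u t => Real.exp (-(k*t)) * ∫ s in Iic t, Real.exp (k*s) * g u s with hTfdef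
  have hexp1 : ∀ t : ℝ, Real.exp (-(k*t)) * Real.exp (k*t) = 1 := by
    intro t; rw [← Real.exp_add]; simp
  have h2Mk : 2*M^2/k = M := by rw [hkdef]; field_simp
  have key : ∀ (u : ℝ →ᵇ ℝ), (∀ s, |u s - M| ≤ R) → ∀ t,
      Tf u t - M = Real.exp (-(k*t)) * ∫ s in Iic t, Real.exp (k*s) * (g u s - 2*M^2) := by
    intro u hu t
    have h1 : (fun s => Real.exp (k*s) * (g u s - 2*M^2))
        = fun s => Real.exp (k*s) * g u s - (2*M^2) * Real.exp (k*s) := by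
      funext s; ring
    rw [h1, MeasureTheory.integral_sub (hInt u hu t) ((expk_integrableOn k hkpos t).const_mul _),
      MeasureTheory.integral_const_mul, integral_expk_Iic k hkpos t, mul_sub, hTfdef]
    have h3 : Real.exp (-(k*t)) * (2*M^2 * (Real.exp (k*t)/k)) = M := by
      calc Real.exp (-(k*t)) * (2*M^2 * (Real.exp (k*t)/k))
          = (Real.exp (-(k*t)) * Real.exp (k*t)) * (2*M^2/k) := by ring
        _ = M := by rw [hexp1, one_mul, h2Mk]
    rw [h3]
  have hTball : ∀ (u : ℝ →ᵇ ℝ), (∀ s, |u s - M| ≤ R) → ∀ t, |Tf u t - M| ≤ R := by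
    intro u hu t
    rw [key u hu t, abs_mul, abs_of_pos (Real.exp_pos _)]
    have h5 : |∫ s in Iic t, Real.exp (k*s) * (g u s - 2*M^2)|
        ≤ ∫ s in Iic t, Real.exp (k*s) * (k*R) := by
      rw [← Real.norm_eq_abs]
      refine norm_integral_le_of_norm_le ((expk_integrableOn k hkpos t).mul_const _) ?_
      refine ae_of_all _ fun s => ?_
      rw [norm_mul, Real.norm_of_nonneg (Real.exp_pos _).le, Real.norm_eq_abs]
      exact mul_le_mul_of_nonneg_left (hg_abs u hu s) (Real.exp_pos _).le
    have h6 : ∫ s in Iic t, Real.exp (k*s) * (k*R) = Real.exp (k*t)/k * (k*R) := by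
      rw [MeasureTheory.integral_mul_const, integral_expk_Iic k hkpos t]
    have h7 : Real.exp (-(k*t)) * (Real.exp (k*t)/k * (k*R)) = R := by
      calc Real.exp (-(k*t)) * (Real.exp (k*t)/k * (k*R))
          = (Real.exp (-(k*t)) * Real.exp (k*t)) * R * (k/k) := by ring
        _ = R := by rw [hexp1, div_self hkpos.ne']; ring
    calc Real.exp (-(k*t)) * |∫ s in Iic t, Real.exp (k*s) * (g u s - 2*M^2)|
        ≤ Real.exp (-(k*t)) * (Real.exp (k*t)/k * (k*R)) := by
          rw [← h6]; exact mul_le_mul_of_nonneg_left h5 (Real.exp_pos _).le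
      _ = R := h7
  have hTlip : ∀ (u v : ℝ →ᵇ ℝ), (∀ s, |u s - M| ≤ R) → (∀ s, |v s - M| ≤ R) → ∀ t,
      |Tf u t - Tf v t| ≤ (C-c)/(c+C) * dist u v := by
    intro u v hu hv t
    have hsub : Tf u t - Tf v t
        = Real.exp (-(k*t)) * ∫ s in Iic t, Real.exp (k*s) * (g u s - g v s) := by
      have h1 : (fun s => Real.exp (k*s) * (g u s - g v s))
          = fun s => Real.exp (k*s) * g u s - Real.exp (k*s) * g v s := by funext s; ring
      rw [h1, MeasureTheory.integral_sub (hInt u hu t) (hInt v hv t), hTfdef]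
      ring
    have hpt : ∀ s, |g u s - g v s| ≤ 2*R * dist u v := by
      intro s
      have h1 : g u s - g v s = (v s - u s) * ((u s - M) + (v s - M)) := by
        simp only [hgdef]; ring
      rw [h1, abs_mul]
      have h2 : |v s - u s| ≤ dist u v := by
        rw [abs_sub_comm, ← Real.dist_eq]; exact dist_coe_le_dist s
      have h3 : |(u s - M) + (v s - M)| ≤ 2*R := by
        calc |(u s - M) + (v s - M)| ≤ |u s - M| + |v s - M| := abs_add_le _ _
          _ ≤ 2*R := by linarith [hu s, hv s]
      calc |v s - u s| * |(u s - M) + (v s - M)| ≤ dist u v * (2*R) :=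
            mul_le_mul h2 h3 (abs_nonneg _) dist_nonneg
        _ = 2*R * dist u v := by ring
    have h5 : |∫ s in Iic t, Real.exp (k*s) * (g u s - g v s)|
        ≤ ∫ s in Iic t, Real.exp (k*s) * (2*R*dist u v) := by
      rw [← Real.norm_eq_abs]
      refine norm_integral_le_of_norm_le ((expk_integrableOn k hkpos t).mul_const _) ?_
      refine ae_of_all _ fun s => ?_
      rw [norm_mul, Real.norm_of_nonneg (Real.exp_pos _).le, Real.norm_eq_abs]
      exact mul_le_mul_of_nonneg_left (hpt s) (Real.exp_pos _).le
    have h6 : ∫ s in Iic t, Real.exp (k*s) * (2*R*dist u v)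
        = Real.exp (k*t)/k * (2*R*dist u v) := by
      rw [MeasureTheory.integral_mul_const, integral_expk_Iic k hkpos t]
    have h7 : Real.exp (-(k*t)) * (Real.exp (k*t)/k * (2*R*dist u v))
        = 2*R/k * dist u v := by
      calc Real.exp (-(k*t)) * (Real.exp (k*t)/k * (2*R*dist u v))
          = (Real.exp (-(k*t)) * Real.exp (k*t)) * (2*R/k * dist u v) := by ring
        _ = 2*R/k * dist u v := by rw [hexp1, one_mul]
    have h8 : 2*R/k = (C-c)/(c+C) := by
      rw [div_eq_div_iff hkpos.ne' hccC.ne']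
      have h9 : 2*R*(c+C) * k = (C-c)*k*k := by
        have : 2*R*(c+C)*k = (k*R) * (2*(c+C)) := by ring
        rw [this, hkR, ← hk2]; ring
      have := mul_right_cancel₀ hkpos.ne' h9
      linarith [this]
    calc |Tf u t - Tf v t|
        = Real.exp (-(k*t)) * |∫ s in Iic t, Real.exp (k*s) * (g u s - g v s)| := by
          rw [hsub, abs_mul, abs_of_pos (Real.exp_pos _)]
      _ ≤ Real.exp (-(k*t)) * (Real.exp (k*t)/k * (2*R*dist u v)) := by
          rw [← h6]; exact mul_le_mul_of_nonneg_left h5 (Real.exp_pos _).le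
      _ = (C-c)/(c+C) * dist u v := by rw [h7, h8]
  have hTderiv : ∀ (u : ℝ →ᵇ ℝ), (∀ s, |u s - M| ≤ R) → ∀ t,
      HasDerivAt (Tf u) (-(k * Tf u t) + g u t) t := by
    intro u hu t
    have hsplit : ∀ t' : ℝ, (∫ s in Iic t', Real.exp (k*s) * g u s)
        = (∫ s in Iic (0:ℝ), Real.exp (k*s) * g u s)
          + ∫ s in (0:ℝ)..t', Real.exp (k*s) * g u s := by
      intro t'
      have := intervalIntegral.integral_Iic_sub_Iic (hInt u hu 0) (hInt u hu t')
      linarith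
    have hF : HasDerivAt (fun t' => ∫ s in (0:ℝ)..t', Real.exp (k*s) * g u s)
        (Real.exp (k*t) * g u t) t :=
      intervalIntegral.integral_hasDerivAt_right ((hg_cont u).intervalIntegrable 0 t)
        ((hg_cont u).stronglyMeasurableAtFilter _ _) (hg_cont u).continuousAt
    have hG : HasDerivAt (fun t' => ∫ s in Iic t', Real.exp (k*s) * g u s)
        (Real.exp (k*t) * g u t) t := by
      have h1 : (fun t' => ∫ s in Iic t', Real.exp (k*s) * g u s)
          = fun t' => (∫ s in Iic (0:ℝ), Real.exp (k*s) * g u s)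
              + ∫ s in (0:ℝ)..t', Real.exp (k*s) * g u s := funext hsplit
      rw [h1]
      exact hF.const_add _
    have he : HasDerivAt (fun t' : ℝ => Real.exp (-(k*t'))) (-k * Real.exp (-(k*t))) t := by
      have h2 : HasDerivAt (fun t' : ℝ => -(k*t')) (-k) t := by
        simpa [Pi.neg_def] using ((hasDerivAt_id t).const_mul k).neg
      simpa [mul_comm, Function.comp_def] using (Real.hasDerivAt_exp (-(k*t))).comp t h2
    have hprod := he.mul hG
    have h3 : HasDerivAt (Tf u)
        (-k * Real.exp (-(k*t)) * (∫ s in Iic t, Real.exp (k*s) * g u s)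
          + Real.exp (-(k*t)) * (Real.exp (k*t) * g u t)) t := by
      rw [hTfdef]; exact hprod
    convert h3 using 1
    have h4 : Real.exp (-(k*t)) * (Real.exp (k*t) * g u t) = g u t := by
      rw [← mul_assoc, hexp1, one_mul]
    rw [h4, hTfdef]
    ring
  -- set up the complete metric space: closed ball in bounded continuous functions
  have hmem : ∀ u : ℝ →ᵇ ℝ,
      u ∈ Metric.closedBall (BoundedContinuousFunction.const ℝ M) R ↔ ∀ t, |u t - M| ≤ R := by
    intro u
    rw [Metric.mem_closedBall, BoundedContinuousFunction.dist_le hRnn]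
    simp [Real.dist_eq]
  have hTcont : ∀ (u : ℝ →ᵇ ℝ), (∀ s, |u s - M| ≤ R) → Continuous (Tf u) := by
    intro u hu
    exact continuous_iff_continuousAt.2 fun t => (hTderiv u hu t).continuousAt
  have hTnorm : ∀ (u : ℝ →ᵇ ℝ), (∀ s, |u s - M| ≤ R) → ∀ t, ‖Tf u t‖ ≤ M + R := by
    intro u hu t
    rw [Real.norm_eq_abs]
    have h1 := hTball u hu t
    have h2 := abs_le.mp h1
    rw [abs_le]
    constructor <;> [linarith [h2.1, hMpos.le]; linarith [h2.2]]
  set S := Metric.closedBall (BoundedContinuousFunction.const ℝ M) R with hSdef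
  haveI : Nonempty S := ⟨⟨BoundedContinuousFunction.const ℝ M, Metric.mem_closedBall_self hRnn⟩⟩
  haveI : CompleteSpace S := IsClosed.completeSpace_coe (hs := Metric.isClosed_closedBall)
  set TS : S → S := fun u =>
    ⟨BoundedContinuousFunction.ofNormedAddCommGroup (Tf u.1)
        (hTcont u.1 ((hmem u.1).1 u.2)) (M + R) (hTnorm u.1 ((hmem u.1).1 u.2)),
      (hmem _).2 (by
        intro t
        simpa [BoundedContinuousFunction.coe_ofNormedAddCommGroup]
          using hTball u.1 ((hmem u.1).1 u.2) t)⟩ with hTSdef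
  have hKlt : (C-c)/(c+C) < 1 := by rw [div_lt_one hccC]; linarith
  have hKnn : 0 ≤ (C-c)/(c+C) := div_nonneg (by linarith) hccC.le
  have hcontr : ContractingWith (Real.toNNReal ((C-c)/(c+C))) TS := by
    constructor
    · rw [← Real.toNNReal_one]
      exact (Real.toNNReal_lt_toNNReal_iff one_pos).2 hKlt
    · refine LipschitzWith.of_dist_le_mul fun u v => ?_
      rw [Subtype.dist_eq]
      refine (BoundedContinuousFunction.dist_le ?_).2 fun t => ?_
      · positivity
      · rw [hTSdef]
        simp only [BoundedContinuousFunction.coe_ofNormedAddCommGroup]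
        rw [Real.dist_eq]
        have := hTlip u.1 v.1 ((hmem u.1).1 u.2) ((hmem v.1).1 v.2) t
        rw [Real.coe_toNNReal _ hKnn, Subtype.dist_eq]
        exact this
  set w := ContractingWith.fixedPoint TS hcontr with hwdef
  have hfixS : TS w = w := hcontr.fixedPoint_isFixedPt
  set u0 : ℝ →ᵇ ℝ := w.1 with hu0def
  have hu0mem : ∀ s, |u0 s - M| ≤ R := (hmem u0).1 w.2
  have hfix : ∀ t, Tf u0 t = u0 t := by
    intro t
    have h1 := congrArg (fun q : S => (q.1 : ℝ → ℝ) t) hfixS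
    simpa [hTSdef, BoundedContinuousFunction.coe_ofNormedAddCommGroup] using h1
  have hMR : 0 < M - R := by
    rw [sub_pos, hRdef, hkdef, div_lt_iff₀ (by positivity)]
    nlinarith [hM2]
  refine ⟨u0, u0.continuous, ⟨M - R, M + R, hMR, fun t => ?_⟩, fun t => ?_⟩
  · have := abs_le.mp (hu0mem t)
    constructor <;> linarith [this.1, this.2]
  · have hueq : Tf u0 = ⇑u0 := funext hfix
    have h1 := hTderiv u0 hu0mem t
    rw [hueq] at h1
    convert h1 using 1
    simp only [hgdef, hkdef]
    ring




/-- The variational equation `z'' = a(t) z` with `0 < c ≤ a(t) ≤ C` has an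
'unstable' solution: a nontrivial `C²` solution with `z > 0`, `z' > 0`, and
`z, z' → 0` as `t → −∞`. -/
theorem unstable_solution_exists
    (a : ℝ → ℝ) (ha : Continuous a)
    (c C : ℝ) (hc : 0 < c) (hbound : ∀ t, c ≤ a t ∧ a t ≤ C) :
    ∃ z : ℝ → ℝ, ContDiff ℝ 2 z ∧ (∃ t, z t ≠ 0) ∧
      (∀ t, HasDerivAt (deriv z) (a t * z t) t) ∧
      (∀ t, 0 < z t ∧ 0 < deriv z t) ∧
      Tendsto z atBot (nhds 0) ∧
      Tendsto (deriv z) atBot (nhds 0) := by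
  obtain ⟨u, hu_cont, ⟨m, B, hm, hmB⟩, hud⟩ := riccati_exists a ha c C hc hbound
  set V : ℝ → ℝ := fun t => ∫ s in (0:ℝ)..t, u s with hVdef
  have hVd : ∀ t, HasDerivAt V (u t) t := fun t =>
    intervalIntegral.integral_hasDerivAt_right (hu_cont.intervalIntegrable 0 t)
      (hu_cont.stronglyMeasurableAtFilter _ _) hu_cont.continuousAt
  set z : ℝ → ℝ := fun t => Real.exp (V t) with hzdef
  have hz : ∀ t, HasDerivAt z (u t * z t) t := by
    intro t
    simpa [mul_comm, Function.comp_def] using (Real.hasDerivAt_exp (V t)).comp t (hVd t)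
  have hderiv_z : deriv z = fun t => u t * z t := funext fun t => (hz t).deriv
  have hzpos : ∀ t, 0 < z t := fun t => Real.exp_pos _
  have hderiv_u : deriv u = fun t => a t - (u t)^2 := funext fun t => (hud t).deriv
  -- C² smoothness
  have hu1 : ContDiff ℝ 1 u := by
    rw [contDiff_one_iff_deriv]
    refine ⟨fun t => (hud t).differentiableAt, ?_⟩
    rw [hderiv_u]
    exact ha.sub (hu_cont.pow 2)
  have hV2 : ContDiff ℝ 2 V := by
    have h2 : ((2:WithTop ℕ∞)) = (1:WithTop ℕ∞) + 1 := by norm_num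
    rw [h2, contDiff_succ_iff_deriv]
    refine ⟨fun t => (hVd t).differentiableAt, ?_, ?_⟩
    · intro h; simp at h
    · have : deriv V = u := funext fun t => (hVd t).deriv
      rw [this]; exact hu1
  have hz2 : ContDiff ℝ 2 z := (Real.contDiff_exp.of_le le_top).comp hV2
  -- second derivative
  have hz'' : ∀ t, HasDerivAt (deriv z) (a t * z t) t := by
    intro t
    rw [hderiv_z]
    have h1 : HasDerivAt (fun t' => u t' * z t') ((a t - u t ^ 2) * z t + u t * (u t * z t)) t :=
      (hud t).mul (hz t)
    convert h1 using 1
    ring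
  -- tendsto bits
  have hVle : ∀ t ≤ (0:ℝ), V t ≤ m * t := by
    intro t ht
    have h1 : ∫ s in t..(0:ℝ), (m:ℝ) ≤ ∫ s in t..(0:ℝ), u s :=
      intervalIntegral.integral_mono_on ht (intervalIntegrable_const)
        (hu_cont.intervalIntegrable t 0) (fun x _ => (hmB x).1)
    rw [intervalIntegral.integral_const] at h1
    have h2 : V t = -∫ s in t..(0:ℝ), u s := intervalIntegral.integral_symm t 0
    rw [h2]
    have : ((0:ℝ) - t) • m = -t * m := by rw [smul_eq_mul]; ring
    rw [this] at h1
    linarith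
  have hVbot : Tendsto V atBot atBot := by
    have hlin : Tendsto (fun t : ℝ => m * t) atBot atBot :=
      (tendsto_const_mul_atBot_of_pos hm).2 tendsto_id
    refine tendsto_atBot_mono' atBot ?_ hlin
    filter_upwards [Iic_mem_atBot 0] with t ht using hVle t ht
  have hz0 : Tendsto z atBot (nhds 0) := by
    exact Real.tendsto_exp_atBot.comp hVbot
  have hz'0 : Tendsto (deriv z) atBot (nhds 0) := by
    rw [hderiv_z]
    have hB : Tendsto (fun t => B * z t) atBot (nhds 0) := by
      simpa using hz0.const_mul B
    refine squeeze_zero (fun t => ?_) (fun t => ?_) hB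
    · exact mul_nonneg (le_trans hm.le (hmB t).1) (hzpos t).le
    · exact mul_le_mul_of_nonneg_right (hmB t).2 (hzpos t).le
  exact ⟨z, hz2, ⟨0, (hzpos 0).ne'⟩, hz'', fun t =>
    ⟨hzpos t, by rw [hderiv_z]; exact mul_pos (lt_of_lt_of_le hm (hmB t).1) (hzpos t)⟩,
    hz0, hz'0⟩
end

section
/- Let a : ℝ → ℝ be a function with a(t) > 0 for all t. If z : ℝ → ℝ is twice differentiable, satisfies z''(t) = a(t)·z(t) for all t, and z(t) → 0 as t → +∞ and as t → −∞, then z(t) = 0 for all t. In particular the variational equation z'' = a(t)z with positive coefficient admits no nontrivial solution biasymptotic to zero, which yields transversality of the intersection of the unstable and stable manifolds along the homoclinic orbit. -/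
/-!
The square `z²` has second derivative `2 (z'² + a z²) ≥ 0`, so it is convex. A convex function
on `ℝ` tending to `0` at both ends is nonpositive, since on `[s, u]` it is bounded by
`max (f s) (f u)`; hence `z² ≤ 0`.
-/

open Filter Set Topology

theorem convexOn_univ_of_hasDerivAt2_nonneg {f f' f'' : ℝ → ℝ}
    (hf : ∀ x, HasDerivAt f (f' x) x) (hf' : ∀ x, HasDerivAt f' (f'' x) x)
    (hf'' : ∀ x, 0 ≤ f'' x) : ConvexOn ℝ univ f :=
  convexOn_of_hasDerivWithinAt2_nonneg convex_univ
    (continuous_iff_continuousAt.mpr fun x ↦ (hf x).continuousAt).continuousOn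
    (fun x _ ↦ (hf x).hasDerivWithinAt) (fun x _ ↦ (hf' x).hasDerivWithinAt) (fun x _ ↦ hf'' x)

theorem convexOn_univ_sq_of_hasDerivAt2 {z z' z'' : ℝ → ℝ}
    (hz : ∀ t, HasDerivAt z (z' t) t) (hz' : ∀ t, HasDerivAt z' (z'' t) t)
    (hzz'' : ∀ t, 0 ≤ z t * z'' t) : ConvexOn ℝ univ fun t ↦ z t ^ 2 := by
  refine convexOn_univ_of_hasDerivAt2_nonneg (f' := fun t ↦ 2 * (z t * z' t))
    (f'' := fun t ↦ 2 * (z' t ^ 2 + z t * z'' t)) (fun t ↦ ?_) (fun t ↦ ?_) (fun t ↦ ?_)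
  · exact ((hz t).pow 2).congr_deriv (by ring)
  · exact (((hz t).mul (hz' t)).const_mul 2).congr_deriv (by ring)
  · have := hzz'' t
    positivity

theorem ConvexOn.nonpos_of_tendsto_atTop_atBot {f : ℝ → ℝ} (hf : ConvexOn ℝ univ f)
    (htop : Tendsto f atTop (𝓝 0)) (hbot : Tendsto f atBot (𝓝 0)) (t : ℝ) : f t ≤ 0 := by
  refine le_of_forall_pos_le_add fun ε hε ↦ ?_
  obtain ⟨u, hfu, htu⟩ :=
    ((htop.eventually (gt_mem_nhds hε)).and (eventually_ge_atTop t)).exists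
  obtain ⟨s, hfs, hst⟩ :=
    ((hbot.eventually (gt_mem_nhds hε)).and (eventually_le_atBot t)).exists
  have ht : t ∈ segment ℝ s u := by
    rw [segment_eq_Icc (hst.trans htu)]
    exact ⟨hst, htu⟩
  calc f t ≤ max (f s) (f u) := hf.le_on_segment (mem_univ s) (mem_univ u) ht
    _ ≤ 0 + ε := (max_le hfs.le hfu.le).trans_eq (zero_add ε).symm

/-- The variational equation `z'' = a(t) z` with positive coefficient `a`
admits no nontrivial solution biasymptotic to zero: if `z → 0` at both `±∞`, then `z ≡ 0`. -/
theorem no_nontrivial_biasymptotic_solution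
    (a : ℝ → ℝ) (ha : ∀ t, 0 < a t)
    (z z' : ℝ → ℝ)
    (hz : ∀ t, HasDerivAt z (z' t) t)
    (hz' : ∀ t, HasDerivAt z' (a t * z t) t)
    (htop : Tendsto z atTop (nhds 0))
    (hbot : Tendsto z atBot (nhds 0)) :
    ∀ t, z t = 0 := by
  have hconv : ConvexOn ℝ univ fun t ↦ z t ^ 2 :=
    convexOn_univ_sq_of_hasDerivAt2 hz hz' fun t ↦ by
      rw [mul_left_comm]
      exact mul_nonneg (ha t).le (mul_self_nonneg (z t))
  have hsq_top : Tendsto (fun t ↦ z t ^ 2) atTop (𝓝 0) := by simpa using htop.pow 2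
  have hsq_bot : Tendsto (fun t ↦ z t ^ 2) atBot (𝓝 0) := by simpa using hbot.pow 2
  intro t
  exact pow_eq_zero_iff two_ne_zero |>.mp <|
    (hconv.nonpos_of_tendsto_atTop_atBot hsq_top hsq_bot t).antisymm (sq_nonneg (z t))
end
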